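/- Let R be a ring. If a chain complex X of R-modules is a filtered colimit of contractible complexes, then X is pure acyclic, i.e., M ⊗ X is acyclic for every R-module M. -/

import Mathlib

/-!
The tensor product with the sphere `S⁰(M)` is the degreewise tensor product `M ⊗ -`. This
functor is additive, so it keeps the complexes `F j` contractible, hence acyclic, and it commutes
with colimits, so `S⁰(M) ⊗ X` is a filtered colimit of acyclic complexes. Filtered colimits are
exact in modules (AB5), hence such a colimit is again acyclic.
-/

/-!
Setup: we work with cochain complexes of modules over a commutative ring,
with the monoidal (total tensor product) structure on complexes.
-/

open CategoryTheory MonoidalCategory Limits HomologicalComplex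

noncomputable section

variable (R : Type) [CommRing R]

/-- Tensoring on the right preserves colimits in `ModuleCat R`. -/
instance (Z : ModuleCat R) : PreservesColimits (tensorRight Z) :=
  preservesColimits_of_natIso (F := tensorLeft Z)
    (NatIso.ofComponents (fun X => β_ Z X) (by intros; simp))

instance : (curriedTensor (ModuleCat R)).Additive where
  map_add := by intros; ext; simp [curriedTensor]

instance (X : ModuleCat R) : ((curriedTensor (ModuleCat R)).obj X).Additive where
  map_add := by intros; simp [curriedTensor]

instance (X₁ X₂ X₃ : GradedObject ℤ (ModuleCat R)) :
    GradedObject.HasGoodTensor₁₂Tensor X₁ X₂ X₃ :=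
  fun _ _ => inferInstanceAs (PreservesColimit _ (tensorRight _))

instance (X₁ X₂ X₃ : GradedObject ℤ (ModuleCat R)) :
    GradedObject.HasGoodTensorTensor₂₃ X₁ X₂ X₃ :=
  fun _ _ => inferInstanceAs (PreservesColimit _ (tensorLeft _))

instance (X₁ X₂ X₃ X₄ : GradedObject ℤ (ModuleCat R)) :
    GradedObject.HasTensor₄ObjExt X₁ X₂ X₃ X₄ :=
  fun _ _ => inferInstanceAs (PreservesColimit _ (tensorLeft _))

instance (X : ModuleCat R) :
    PreservesColimit (Functor.empty.{0} (ModuleCat R)) ((curriedTensor (ModuleCat R)).obj X) :=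
  inferInstanceAs (PreservesColimit _ (tensorLeft _))

instance (X : ModuleCat R) :
    PreservesColimit (Functor.empty.{0} (ModuleCat R)) ((curriedTensor (ModuleCat R)).flip.obj X) :=
  inferInstanceAs (PreservesColimit _ (tensorRight _))

/-- The category of (cochain) complexes of `R`-modules, with its tensor product. -/
abbrev Kx := CochainComplex (ModuleCat R) ℤ

variable {R}

/-- A complex is acyclic (exact) if its homology vanishes in every degree. -/
def IsAcyclic (X : Kx R) : Prop := ∀ n : ℤ, X.ExactAt n

/-- The sphere complex `S^0(M)`: the module `M` concentrated in degree `0`. -/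
def sphere0 (M : ModuleCat R) : Kx R :=
  (HomologicalComplex.single (ModuleCat R) (ComplexShape.up ℤ) 0).obj M

namespace CategoryTheory

variable {C D ι : Type*} [Category C] [Category D] {c : ComplexShape ι}

def Functor.mapContractingHomotopy [Preadditive C] [Preadditive D] (F : C ⥤ D) [F.Additive]
    {K : HomologicalComplex C c} (h : Homotopy (𝟙 K) 0) :
    Homotopy (𝟙 ((F.mapHomologicalComplex c).obj K)) 0 :=
  ((Homotopy.ofEq ((F.mapHomologicalComplex c).map_id K).symm).trans (F.mapHomotopy h)).trans
    (Homotopy.ofEq (Functor.map_zero _ _ _))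

lemma ShortComplex.exact_of_forall_exact_map_evaluation {J : Type*} [Category J] [Abelian C]
    (S : ShortComplex (J ⥤ C)) (hS : ∀ j, (S.map ((evaluation J C).obj j)).Exact) :
    S.Exact := by
  rw [S.exact_iff_isZero_homology]
  exact Functor.isZero _ fun j => ((exact_iff_isZero_homology _).1 (hS j)).of_iso
    (S.mapHomologyIso ((evaluation J C).obj j)).symm

end CategoryTheory

namespace HomologicalComplex

variable {C ι : Type*} [Category C] {c : ComplexShape ι}

lemma exactAt_of_homotopy_id_zero [Preadditive C] [CategoryWithHomology C]
    {K : HomologicalComplex C c} (h : Homotopy (𝟙 K) 0) (i : ι) : K.ExactAt i := by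
  rw [exactAt_iff_isZero_homology, IsZero.iff_id_eq_zero]
  simpa using h.homologyMap_eq i

lemma exactAt_colimit [Abelian C] {J : Type*} [Category J] [HasColimitsOfShape J C]
    [HasExactColimitsOfShape J C] (G : J ⥤ HomologicalComplex C c) (i : ι)
    (hG : ∀ j, (G.obj j).ExactAt i) : (colimit G).ExactAt i := by
  let S := (ShortComplex.FunctorEquivalence.inverse J C).obj (G ⋙ shortComplexFunctor C c i)
  have hS : S.Exact := ShortComplex.exact_of_forall_exact_map_evaluation S hG
  exact colim.exact_mapShortComplex hS
    (isColimitOfPreserves (eval C c (c.prev i)) (colimit.isColimit G))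
    (isColimitOfPreserves (eval C c i) (colimit.isColimit G))
    (isColimitOfPreserves (eval C c (c.next i)) (colimit.isColimit G))
    _ _ (fun j => (colimit.ι G j).comm (c.prev i) i)
    (fun j => (colimit.ι G j).comm i (c.next i))

end HomologicalComplex

section SingleTensor

variable (M : ModuleCat R) (K : Kx R)

-- `sphere0 M` unfolded, so that the API of `single` applies to it.
local notation "𝕊" M:max => Functor.obj (single (ModuleCat R) (ComplexShape.up ℤ) 0) M

lemma isZero_single_X_tensor {p : ℤ} (hp : p ≠ 0) (Y : ModuleCat R) :
    IsZero ((𝕊 M).X p ⊗ Y) :=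
  (tensorRight Y).map_isZero (isZero_single_obj_X (ComplexShape.up ℤ) 0 M p hp)

lemma single_tensor_d₁ (p q n : ℤ) :
    mapBifunctor.d₁ (𝕊 M) K (curriedTensor (ModuleCat R)) (ComplexShape.up ℤ) p q n = 0 := by
  by_cases h₁ : (ComplexShape.up ℤ).Rel p ((ComplexShape.up ℤ).next p)
  · by_cases h₂ : ComplexShape.π (ComplexShape.up ℤ) (ComplexShape.up ℤ) (ComplexShape.up ℤ)
        ((ComplexShape.up ℤ).next p, q) = n
    · rw [mapBifunctor.d₁_eq _ _ _ _ h₁ _ _ h₂, single_obj_d, Functor.map_zero,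
        zero_app, zero_comp, smul_zero]
    · rw [mapBifunctor.d₁_eq_zero' _ _ _ _ h₁ _ _ h₂]
  · rw [mapBifunctor.d₁_eq_zero _ _ _ _ _ _ _ h₁]

def singleTensorXIso (n : ℤ) :
    (HomologicalComplex.tensorObj (𝕊 M) K).X n ≅ M ⊗ K.X n where
  hom := mapBifunctorDesc fun p q h =>
    if hp : p = 0 then
      (singleObjXIsoOfEq (ComplexShape.up ℤ) 0 M p hp).hom ▷ K.X q ≫
        eqToHom (by subst hp; rw [show q = n by simpa using h])
    else 0
  inv := (singleObjXSelf (ComplexShape.up ℤ) 0 M).inv ▷ K.X n ≫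
    ιTensorObj (𝕊 M) K 0 n n (zero_add n)
  hom_inv_id := by
    apply mapBifunctor.hom_ext
    intro p q h
    by_cases hp : p = 0
    · subst hp
      obtain rfl : q = n := by simpa using h
      simp [singleObjXSelf, ← comp_whiskerRight_assoc]
    · exact (isZero_single_X_tensor M hp _).eq_of_src _ _
  inv_hom_id := by
    simp [singleObjXSelf, ← comp_whiskerRight]

lemma singleTensorXIso_inv_comm (i j : ℤ) :
    (singleTensorXIso M K i).inv ≫ (HomologicalComplex.tensorObj (𝕊 M) K).d i j =
      M ◁ K.d i j ≫ (singleTensorXIso M K j).inv := by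
  by_cases hij : (ComplexShape.up ℤ).Rel i j
  · simp only [singleTensorXIso, Category.assoc, mapBifunctor.d_eq, Preadditive.comp_add,
      mapBifunctor.ι_D₁, mapBifunctor.ι_D₂, single_tensor_d₁, comp_zero, zero_add]
    rw [mapBifunctor.d₂_eq _ _ _ _ _ hij _ (by simp)]
    dsimp
    simp only [one_smul, ← whisker_exchange_assoc]
  · simp only [shape _ _ _ hij, comp_zero, zero_comp, MonoidalPreadditive.whiskerLeft_zero]

def singleTensorIso :
    𝕊 M ⊗ K ≅ ((tensorLeft M).mapHomologicalComplex (ComplexShape.up ℤ)).obj K :=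
  (Hom.isoOfComponents (fun n => (singleTensorXIso M K n).symm)
    (fun i j _ => singleTensorXIso_inv_comm M K i j)).symm

end SingleTensor

/-- If a complex `X` of `R`-modules is a filtered colimit of
contractible complexes, then `X` is pure acyclic, i.e. `M ⊗ X` is acyclic for every
`R`-module `M`. -/
theorem pureAcyclic_of_filtered_colimit_of_contractibles
    (J : Type) [SmallCategory J] [IsFiltered J] (F : J ⥤ Kx R)
    (hF : ∀ j : J, Nonempty (Homotopy (𝟙 (F.obj j)) 0))
    (X : Kx R) (e : X ≅ colimit F) :
    ∀ M : ModuleCat R, IsAcyclic (sphere0 M ⊗ X) := by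
  intro M n
  let T := (tensorLeft M).mapHomologicalComplex (ComplexShape.up ℤ)
  have hT : ∀ j, ((F ⋙ T).obj j).ExactAt n := fun j =>
    exactAt_of_homotopy_id_zero ((tensorLeft M).mapContractingHomotopy (hF j).some) n
  have e' : sphere0 M ⊗ X ≅ colimit (F ⋙ T) :=
    (tensorLeft (sphere0 M)).mapIso e ≪≫ singleTensorIso M (colimit F) ≪≫
      preservesColimitIso T F
  exact (exactAt_colimit (F ⋙ T) n hT).of_iso e'.symm
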